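/- arXiv:0910.0234 — 3 statements merged into one kernel-verified Lean document; each statement's English description precedes it below -/
import Mathlib

section
/- For any g = [[a,b],[c,d]] in SU(1,1) with |d| > |c|, the operator T_g maps H^∞(𝔻) into itself and its operator norm on H^∞(𝔻) equals 1/(|d|−|c|). -/
open Complex

/-- `g` belongs to `SU(1,1)`. -/
def IsSU11 (g : Matrix (Fin 2) (Fin 2) ℂ) : Prop :=
  g 1 0 = starRingEnd ℂ (g 0 1) ∧ g 1 1 = starRingEnd ℂ (g 0 0) ∧
    g 0 0 * g 1 1 - g 0 1 * g 1 0 = 1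

/-- The weighted composition operator `(T_g f)(z) = f(φ(z))/(cz+d)`. -/
noncomputable def Tg (g : Matrix (Fin 2) (Fin 2) ℂ) (f : ℂ → ℂ) (z : ℂ) : ℂ :=
  (g 1 0 * z + g 1 1)⁻¹ * f ((g 0 0 * z + g 0 1) / (g 1 0 * z + g 1 1))

/-- The set of values `|f(z)|` for `z` in the open unit disc. -/
def hinfSet (f : ℂ → ℂ) : Set ℝ := {y | ∃ z : ℂ, ‖z‖ < 1 ∧ y = ‖f z‖}

/-- Membership in `H^∞(𝔻)`: bounded analytic functions on the disc. -/
def MemHinf (f : ℂ → ℂ) : Prop :=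
  DifferentiableOn ℂ f (Metric.ball 0 1) ∧ BddAbove (hinfSet f)

/-- The sup norm on `H^∞(𝔻)`. -/
noncomputable def hinfNorm (f : ℂ → ℂ) : ℝ := sSup (hinfSet f)

/-!
The Möbius map `φ z = (a z + b) / (c z + d)` of `g ∈ SU(1,1)` maps the disc into itself, because
`|c z + d|² - |a z + b|² = (|a|² - |b|²)(1 - |z|²) = 1 - |z|²`. Since `|c z + d| ≥ |d| - |c|` on the
disc, `‖T_g f‖ ≤ ‖f‖ / (|d| - |c|)`. The bound is attained by `f = 1`: `T_g 1 = 1 / (c z + d)` is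
continuous on the closed disc and `|c z + d| = |d| - |c|` at a boundary point.
-/

open Metric ComplexConjugate

lemma normSq_conj_mul_add_conj_sub_normSq (a b z : ℂ) :
    normSq (conj b * z + conj a) - normSq (a * z + b)
      = (normSq a - normSq b) * (1 - normSq z) := by
  simp only [normSq_apply, add_re, add_im, mul_re, mul_im, conj_re, conj_im]
  ring

lemma sub_norm_le_norm_mul_add {c d z : ℂ} (hz : ‖z‖ ≤ 1) : ‖d‖ - ‖c‖ ≤ ‖c * z + d‖ := by
  have hcz : ‖c * z‖ ≤ ‖c‖ := by
    simpa [norm_mul] using mul_le_of_le_one_right (norm_nonneg c) hz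
  have := norm_sub_norm_le d (-(c * z))
  rw [norm_neg, sub_neg_eq_add, add_comm] at this
  linarith

lemma exists_norm_mul_add_eq_sub_norm {c d : ℂ} (hcd : ‖c‖ ≤ ‖d‖) :
    ∃ z : ℂ, ‖z‖ ≤ 1 ∧ ‖c * z + d‖ = ‖d‖ - ‖c‖ := by
  rcases eq_or_ne c 0 with rfl | hc
  · exact ⟨0, by simp, by simp⟩
  have hd : d ≠ 0 := norm_pos_iff.mp ((norm_pos_iff.mpr hc).trans_le hcd)
  -- the boundary point where `c z` points opposite to `d`
  refine ⟨-(‖c‖ / ‖d‖ : ℂ) * (d / c), ?_, ?_⟩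
  · simp [hc, hd]
  · have : c * (-(‖c‖ / ‖d‖ : ℂ) * (d / c)) + d = ((1 - ‖c‖ / ‖d‖ : ℝ) : ℂ) * d := by
      push_cast; field_simp; ring
    have hcd' : ‖c‖ / ‖d‖ ≤ 1 := (div_le_one (norm_pos_iff.mpr hd)).mpr hcd
    rw [this, norm_mul, norm_real, Real.norm_of_nonneg (sub_nonneg.mpr hcd')]
    field_simp

lemma mul_add_ne_zero_of_norm_lt {c d z : ℂ} (hcd : ‖c‖ < ‖d‖) (hz : ‖z‖ ≤ 1) : c * z + d ≠ 0 :=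
  norm_pos_iff.mp ((sub_pos.mpr hcd).trans_le (sub_norm_le_norm_mul_add hz))

section hinf

variable {f : ℂ → ℂ}

lemma hinfSet_nonempty (f : ℂ → ℂ) : (hinfSet f).Nonempty := ⟨_, 0, by simp, rfl⟩

lemma bddAbove_hinfSet {M : ℝ} (h : ∀ z : ℂ, ‖z‖ < 1 → ‖f z‖ ≤ M) : BddAbove (hinfSet f) :=
  ⟨M, by rintro _ ⟨z, hz, rfl⟩; exact h z hz⟩

lemma norm_le_hinfNorm (hf : BddAbove (hinfSet f)) {z : ℂ} (hz : ‖z‖ < 1) :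
    ‖f z‖ ≤ hinfNorm f :=
  le_csSup hf ⟨z, hz, rfl⟩

lemma hinfNorm_le {M : ℝ} (h : ∀ z : ℂ, ‖z‖ < 1 → ‖f z‖ ≤ M) : hinfNorm f ≤ M :=
  csSup_le (hinfSet_nonempty f) (by rintro _ ⟨z, hz, rfl⟩; exact h z hz)

lemma norm_le_hinfNorm_of_continuousOn (hc : ContinuousOn f (closedBall 0 1))
    (hf : BddAbove (hinfSet f)) {z : ℂ} (hz : ‖z‖ ≤ 1) : ‖f z‖ ≤ hinfNorm f := by
  have hz' : z ∈ closure (ball (0 : ℂ) 1) := by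
    rwa [closure_ball _ one_ne_zero, mem_closedBall_zero_iff]
  have hcont : ContinuousWithinAt (fun w => ‖f w‖) (ball 0 1) z :=
    ((hc z (mem_closedBall_zero_iff.mpr hz)).norm).mono ball_subset_closedBall
  refine closure_minimal ?_ isClosed_Iic (hcont.mem_closure_image hz')
  rintro _ ⟨w, hw, rfl⟩
  exact norm_le_hinfNorm hf (mem_ball_zero_iff.mp hw)

lemma memHinf_const (w : ℂ) : MemHinf fun _ => w :=
  ⟨differentiableOn_const w, bddAbove_hinfSet fun _ _ => le_rfl⟩

end hinf

namespace IsSU11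

variable {g : Matrix (Fin 2) (Fin 2) ℂ}

lemma normSq_sub_normSq (hg : IsSU11 g) : normSq (g 0 0) - normSq (g 0 1) = 1 := by
  obtain ⟨hc, hd, hdet⟩ := hg
  rw [hc, hd, mul_conj, mul_conj] at hdet
  exact_mod_cast hdet

lemma norm_moebius_lt_one (hg : IsSU11 g) {z : ℂ} (hz : ‖z‖ < 1) :
    ‖(g 0 0 * z + g 0 1) / (g 1 0 * z + g 1 1)‖ < 1 := by
  have key := normSq_conj_mul_add_conj_sub_normSq (g 0 0) (g 0 1) z
  rw [hg.normSq_sub_normSq, one_mul, ← hg.1, ← hg.2.1] at key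
  simp only [normSq_eq_norm_sq] at key
  have hlt : ‖g 0 0 * z + g 0 1‖ < ‖g 1 0 * z + g 1 1‖ := by
    refine lt_of_pow_lt_pow_left₀ 2 (norm_nonneg _) ?_
    nlinarith [norm_nonneg z]
  rw [norm_div, div_lt_one ((norm_nonneg _).trans_lt hlt)]
  exact hlt

end IsSU11

section Tg

variable {g : Matrix (Fin 2) (Fin 2) ℂ} {f : ℂ → ℂ}

lemma norm_Tg_le (hg : IsSU11 g) (hdc : ‖g 1 0‖ < ‖g 1 1‖) (hf : BddAbove (hinfSet f))
    {z : ℂ} (hz : ‖z‖ < 1) : ‖Tg g f z‖ ≤ (‖g 1 1‖ - ‖g 1 0‖)⁻¹ * hinfNorm f := by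
  rw [Tg, norm_mul, norm_inv]
  gcongr
  · exact sub_norm_le_norm_mul_add hz.le
  · exact norm_le_hinfNorm hf (hg.norm_moebius_lt_one hz)

lemma hinfNorm_Tg_le (hg : IsSU11 g) (hdc : ‖g 1 0‖ < ‖g 1 1‖) (hf : BddAbove (hinfSet f)) :
    hinfNorm (Tg g f) ≤ (‖g 1 1‖ - ‖g 1 0‖)⁻¹ * hinfNorm f :=
  hinfNorm_le fun _ hz => norm_Tg_le hg hdc hf hz

lemma differentiableOn_Tg (hg : IsSU11 g) (hdc : ‖g 1 0‖ < ‖g 1 1‖)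
    (hf : DifferentiableOn ℂ f (ball 0 1)) : DifferentiableOn ℂ (Tg g f) (ball 0 1) := by
  have hden : ∀ z ∈ ball (0 : ℂ) 1, g 1 0 * z + g 1 1 ≠ 0 := fun z hz =>
    mul_add_ne_zero_of_norm_lt hdc (mem_ball_zero_iff.mp hz).le
  have hmaps : Set.MapsTo (fun z => (g 0 0 * z + g 0 1) / (g 1 0 * z + g 1 1))
      (ball 0 1) (ball 0 1) :=
    fun z hz => mem_ball_zero_iff.mpr (hg.norm_moebius_lt_one (mem_ball_zero_iff.mp hz))
  refine DifferentiableOn.mul (DifferentiableOn.inv (by fun_prop) hden) (hf.comp ?_ hmaps)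
  exact DifferentiableOn.div (by fun_prop) (by fun_prop) hden

lemma MemHinf.Tg (hg : IsSU11 g) (hdc : ‖g 1 0‖ < ‖g 1 1‖) (hf : MemHinf f) : MemHinf (Tg g f) :=
  ⟨differentiableOn_Tg hg hdc hf.1, bddAbove_hinfSet fun _ hz => norm_Tg_le hg hdc hf.2 hz⟩

lemma hinfNorm_Tg_one (hdc : ‖g 1 0‖ < ‖g 1 1‖) :
    hinfNorm (Tg g fun _ => 1) = (‖g 1 1‖ - ‖g 1 0‖)⁻¹ := by
  have hTg : Tg g (fun _ => 1) = fun z => (g 1 0 * z + g 1 1)⁻¹ := funext fun _ => mul_one _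
  have hle : ∀ z : ℂ, ‖z‖ < 1 → ‖(g 1 0 * z + g 1 1)⁻¹‖ ≤ (‖g 1 1‖ - ‖g 1 0‖)⁻¹ :=
    fun z hz => by
      rw [norm_inv]
      exact inv_anti₀ (sub_pos.mpr hdc) (sub_norm_le_norm_mul_add hz.le)
  have hcont : ContinuousOn (fun z => (g 1 0 * z + g 1 1)⁻¹) (closedBall 0 1) :=
    ContinuousOn.inv₀ (by fun_prop) fun z hz =>
      mul_add_ne_zero_of_norm_lt hdc (mem_closedBall_zero_iff.mp hz)
  obtain ⟨z₀, hz₀, hnorm⟩ := exists_norm_mul_add_eq_sub_norm hdc.le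
  rw [hTg]
  refine le_antisymm (hinfNorm_le hle) ?_
  calc (‖g 1 1‖ - ‖g 1 0‖)⁻¹ = ‖(g 1 0 * z₀ + g 1 1)⁻¹‖ := by rw [norm_inv, hnorm]
    _ ≤ _ := norm_le_hinfNorm_of_continuousOn hcont (bddAbove_hinfSet hle) hz₀

end Tg

/-- For `g = [[a,b],[c,d]] ∈ SU(1,1)` with `|d| > |c|`, `T_g` maps `H^∞(𝔻)` into itself
and its operator norm equals `1/(|d| - |c|)`. -/
theorem Tg_Hinf_norm (g : Matrix (Fin 2) (Fin 2) ℂ) (hg : IsSU11 g)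
    (hdc : ‖g 1 0‖ < ‖g 1 1‖) :
    (∀ f, MemHinf f → MemHinf (Tg g f)) ∧
    sSup {y | ∃ f, MemHinf f ∧ hinfNorm f ≤ 1 ∧ y = hinfNorm (Tg g f)}
      = (‖g 1 1‖ - ‖g 1 0‖)⁻¹ := by
  refine ⟨fun f hf => hf.Tg hg hdc, IsGreatest.csSup_eq ⟨?_, ?_⟩⟩
  · exact ⟨fun _ => 1, memHinf_const 1, hinfNorm_le fun _ _ => by simp,
      (hinfNorm_Tg_one hdc).symm⟩
  · rintro _ ⟨f, hf, hf1, rfl⟩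
    calc hinfNorm (Tg g f) ≤ (‖g 1 1‖ - ‖g 1 0‖)⁻¹ * hinfNorm f := hinfNorm_Tg_le hg hdc hf.2
      _ ≤ (‖g 1 1‖ - ‖g 1 0‖)⁻¹ :=
        mul_le_of_le_one_right (inv_nonneg.mpr (sub_nonneg.mpr hdc.le)) hf1
end

section
/- Let Γ be a discrete Abelian group and (h_n)_{n≥0} a sequence in ℓ²(Γ) such that each convolution operator M_{h_n}: u ↦ h_n ⋆ u is bounded on ℓ²(Γ). If there exists M > 0 such that for every v ∈ ℓ²(Γ) with ‖v‖ = 1 one has Σ_{n≥0} ‖M_{h_n}* v‖ ≤ M, then for every input sequence (u_n) with sup_n ‖u_n‖_{ℓ²(Γ)} < ∞, the outputs y_n = Σ_{m=0}^n h_{n−m} ⋆ u_m satisfy sup_n ‖y_n‖_{ℓ²(Γ)} ≤ M · sup_n ‖u_n‖_{ℓ²(Γ)}. -/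
/-!
Test `y_n` against unit vectors `v`: moving each `M_{h_{n-m}}` across the inner product gives
`|⟪v, y_n⟫| ≤ Σ_m ‖M_{h_{n-m}}* v‖ ‖u_m‖ ≤ (sup_m ‖u_m‖) Σ_k ‖M_{h_k}* v‖ ≤ M sup_m ‖u_m‖`.
-/

open scoped InnerProductSpace

section InnerProduct

variable {𝕜 E F : Type*} [RCLike 𝕜] [NormedAddCommGroup E] [InnerProductSpace 𝕜 E]

theorem norm_le_of_forall_norm_inner_le {y : E} {C : ℝ} (hC : 0 ≤ C)
    (h : ∀ v : E, ‖v‖ = 1 → ‖⟪v, y⟫_𝕜‖ ≤ C) : ‖y‖ ≤ C := by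
  rcases eq_or_ne y 0 with rfl | hy
  · simpa using hC
  have hy' : 0 < ‖y‖ := norm_pos_iff.mpr hy
  have hunit : ‖(‖y‖⁻¹ : 𝕜) • y‖ = 1 := by
    rw [norm_smul, norm_inv, RCLike.norm_ofReal, abs_of_pos hy', inv_mul_cancel₀ hy'.ne']
  have hinner : ‖⟪(‖y‖⁻¹ : 𝕜) • y, y⟫_𝕜‖ = ‖y‖ := by
    rw [inner_smul_left, inner_self_eq_norm_sq_to_K, norm_mul, RCLike.norm_conj, norm_inv,
      norm_pow, RCLike.norm_ofReal, abs_of_pos hy']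
    field_simp
  exact hinner ▸ h _ hunit

variable [NormedAddCommGroup F] [InnerProductSpace 𝕜 F] [CompleteSpace E] [CompleteSpace F]

theorem norm_inner_sum_apply_le {ι : Type*} (s : Finset ι) (T : ι → E →L[𝕜] F) (x : ι → E)
    {S : ℝ} (hx : ∀ i ∈ s, ‖x i‖ ≤ S) (v : F) :
    ‖⟪v, ∑ i ∈ s, T i (x i)⟫_𝕜‖ ≤ (∑ i ∈ s, ‖ContinuousLinearMap.adjoint (T i) v‖) * S :=
  calc ‖⟪v, ∑ i ∈ s, T i (x i)⟫_𝕜‖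
      = ‖∑ i ∈ s, ⟪ContinuousLinearMap.adjoint (T i) v, x i⟫_𝕜‖ := by
        simp only [inner_sum, ContinuousLinearMap.adjoint_inner_left]
    _ ≤ ∑ i ∈ s, ‖⟪ContinuousLinearMap.adjoint (T i) v, x i⟫_𝕜‖ := norm_sum_le _ _
    _ ≤ ∑ i ∈ s, ‖ContinuousLinearMap.adjoint (T i) v‖ * S := Finset.sum_le_sum fun i hi =>
        (norm_inner_le_norm _ _).trans (mul_le_mul_of_nonneg_left (hx i hi) (norm_nonneg _))
    _ = (∑ i ∈ s, ‖ContinuousLinearMap.adjoint (T i) v‖) * S := (Finset.sum_mul _ _ _).symm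

end InnerProduct

theorem bibo_sufficient_general (Γ : Type*)
    (M : ℕ → lp (fun _ : Γ => ℂ) 2 →L[ℂ] lp (fun _ : Γ => ℂ) 2)
    (Mc : ℝ) (hMc : 0 < Mc)
    (hadj : ∀ v : lp (fun _ : Γ => ℂ) 2, ‖v‖ = 1 →
      ∀ N : ℕ, ∑ n ∈ Finset.range N, ‖ContinuousLinearMap.adjoint (M n) v‖ ≤ Mc)
    (u : ℕ → lp (fun _ : Γ => ℂ) 2)
    (hu : BddAbove (Set.range fun n => ‖u n‖)) :
    ∀ n : ℕ, ‖∑ m ∈ Finset.range (n + 1), M (n - m) (u m)‖ ≤ Mc * ⨆ m, ‖u m‖ := by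
  intro n
  have hS : ∀ m, ‖u m‖ ≤ ⨆ m, ‖u m‖ := le_ciSup hu
  have hS0 : 0 ≤ ⨆ m, ‖u m‖ := (norm_nonneg _).trans (hS 0)
  refine norm_le_of_forall_norm_inner_le (𝕜 := ℂ) (mul_nonneg hMc.le hS0) fun v hv => ?_
  have hreflect : ∑ m ∈ Finset.range (n + 1), ‖ContinuousLinearMap.adjoint (M (n - m)) v‖ =
      ∑ k ∈ Finset.range (n + 1), ‖ContinuousLinearMap.adjoint (M k) v‖ := by
    simpa using Finset.sum_range_reflect (fun k => ‖ContinuousLinearMap.adjoint (M k) v‖) (n + 1)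
  calc _ ≤ (∑ m ∈ Finset.range (n + 1), ‖ContinuousLinearMap.adjoint (M (n - m)) v‖) *
          ⨆ m, ‖u m‖ := norm_inner_sum_apply_le _ _ _ (fun m _ => hS m) v
    _ ≤ Mc * ⨆ m, ‖u m‖ := by
        rw [hreflect]
        exact mul_le_mul_of_nonneg_right (hadj v hv (n + 1)) hS0

/-- Sufficiency for BIBO stability: if the convolution operators `M_{h_n}` on `ℓ²(Γ)` satisfy
`Σ_n ‖M_{h_n}* v‖ ≤ M` for every unit vector `v`, then bounded inputs give outputs
`y_n = Σ_{m=0}^n h_{n-m} ⋆ u_m` with `sup_n ‖y_n‖ ≤ M · sup_n ‖u_n‖`. -/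
theorem bibo_sufficient (Γ : Type*) [CommGroup Γ]
    (h : ℕ → lp (fun _ : Γ => ℂ) 2)
    (M : ℕ → lp (fun _ : Γ => ℂ) 2 →L[ℂ] lp (fun _ : Γ => ℂ) 2)
    (hM : ∀ (n : ℕ) (u : lp (fun _ : Γ => ℂ) 2) (γ : Γ),
      (M n u) γ = ∑' φ : Γ, h n (γ * φ⁻¹) * u φ)
    (Mc : ℝ) (hMc : 0 < Mc)
    (hadj : ∀ v : lp (fun _ : Γ => ℂ) 2, ‖v‖ = 1 →
      ∀ N : ℕ, ∑ n ∈ Finset.range N, ‖ContinuousLinearMap.adjoint (M n) v‖ ≤ Mc)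
    (u : ℕ → lp (fun _ : Γ => ℂ) 2)
    (hu : BddAbove (Set.range fun n => ‖u n‖)) :
    ∀ n : ℕ, ‖∑ m ∈ Finset.range (n + 1), M (n - m) (u m)‖ ≤ Mc * ⨆ m, ‖u m‖ :=
  bibo_sufficient_general Γ M Mc hMc hadj u hu
end

section
/- Let Γ be a discrete Abelian group and (h_n)_{n≥0} a sequence in ℓ²(Γ) with each convolution operator M_{h_n} bounded on ℓ²(Γ). If the system y_n = Σ_{m=0}^n h_{n−m} ⋆ u_m is BIBO with constant M (i.e., sup_n ‖y_n‖ ≤ M sup_n ‖u_n‖ for all bounded input sequences), then for every unit vector v ∈ ℓ²(Γ), Σ_{n=0}^∞ ‖M_{h_n}* v‖ ≤ M. -/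
/-!
Feed the system the input `u_m = ‖M_{h_{n-m}}* v‖⁻¹ • M_{h_{n-m}}* v` (of norm at most one; it is
`0` where the adjoint vanishes, as `0⁻¹ = 0`). Moving the adjoints across the inner product,
the output satisfies `⟪y_n, v⟫ = Σ_{k ≤ n} ‖M_{h_k}* v‖`, and `Re ⟪y_n, v⟫ ≤ ‖y_n‖ ≤ M`.
-/

open Finset RCLike ContinuousLinearMap
open scoped InnerProductSpace

section Normalize

variable {𝕜 E : Type*} [RCLike 𝕜] [NormedAddCommGroup E] [InnerProductSpace 𝕜 E]

lemma norm_inv_norm_smul_le_one (x : E) : ‖(‖x‖⁻¹ : 𝕜) • x‖ ≤ 1 := by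
  rcases eq_or_ne x 0 with rfl | hx
  · simp
  · exact (norm_smul_inv_norm hx).le

lemma inner_inv_norm_smul_self (x : E) : ⟪(‖x‖⁻¹ : 𝕜) • x, x⟫_𝕜 = ‖x‖ := by
  rcases eq_or_ne x 0 with rfl | hx
  · simp
  · have hx' : (‖x‖ : 𝕜) ≠ 0 := ofReal_ne_zero.mpr (norm_ne_zero_iff.mpr hx)
    rw [inner_smul_left, inner_self_eq_norm_sq_to_K, map_inv₀, conj_ofReal, sq,
      inv_mul_cancel_left₀ hx']

end Normalize

section Adjoint

variable {𝕜 E F : Type*} [RCLike 𝕜] [NormedAddCommGroup E] [InnerProductSpace 𝕜 E]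
  [CompleteSpace E] [NormedAddCommGroup F] [InnerProductSpace 𝕜 F] [CompleteSpace F]

lemma inner_sum_apply_inv_norm_smul_adjoint (T : ℕ → E →L[𝕜] F) (v : F) (n : ℕ) :
    ⟪∑ m ∈ range (n + 1),
        T (n - m) ((‖adjoint (T (n - m)) v‖⁻¹ : 𝕜) • adjoint (T (n - m)) v), v⟫_𝕜 =
      ((∑ k ∈ range (n + 1), ‖adjoint (T k) v‖ : ℝ) : 𝕜) := by
  simp_rw [sum_inner, ← adjoint_inner_right, inner_inv_norm_smul_self, ofReal_sum]
  simpa using sum_range_reflect (fun k => (‖adjoint (T k) v‖ : 𝕜)) (n + 1)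

end Adjoint

theorem bibo_necessary_general (Γ : Type*)
    (M : ℕ → lp (fun _ : Γ => ℂ) 2 →L[ℂ] lp (fun _ : Γ => ℂ) 2)
    (Mc : ℝ)
    (hBIBO : ∀ (u : ℕ → lp (fun _ : Γ => ℂ) 2) (C : ℝ), (∀ n, ‖u n‖ ≤ C) →
      ∀ n : ℕ, ‖∑ m ∈ Finset.range (n + 1), M (n - m) (u m)‖ ≤ Mc * C) :
    ∀ v : lp (fun _ : Γ => ℂ) 2, ‖v‖ = 1 →
      ∀ N : ℕ, ∑ n ∈ Finset.range N, ‖ContinuousLinearMap.adjoint (M n) v‖ ≤ Mc := by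
  intro v hv N
  set u : ℕ → lp (fun _ : Γ => ℂ) 2 :=
    fun m => (‖adjoint (M (N - m)) v‖⁻¹ : ℂ) • adjoint (M (N - m)) v
  set y := ∑ m ∈ range (N + 1), M (N - m) (u m)
  have hy : ‖y‖ ≤ Mc := by
    simpa using hBIBO u 1 (fun m => norm_inv_norm_smul_le_one _) N
  have hinner : ⟪y, v⟫_ℂ = ((∑ k ∈ range (N + 1), ‖adjoint (M k) v‖ : ℝ) : ℂ) :=
    inner_sum_apply_inv_norm_smul_adjoint M v N
  calc ∑ n ∈ range N, ‖adjoint (M n) v‖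
      ≤ ∑ k ∈ range (N + 1), ‖adjoint (M k) v‖ :=
        sum_le_sum_of_subset_of_nonneg (range_subset_range.mpr N.le_succ) fun _ _ _ => norm_nonneg _
    _ = re ⟪y, v⟫_ℂ := by rw [hinner]; exact (ofReal_re _).symm
    _ ≤ ‖y‖ * ‖v‖ := re_inner_le_norm y v
    _ ≤ Mc := by rwa [hv, mul_one]

/-- Necessity for BIBO stability: if the system `y_n = Σ_{m=0}^n h_{n-m} ⋆ u_m` on `ℓ²(Γ)`
is BIBO with constant `M` (bounded inputs give outputs bounded by `M` times the input
bound), then `Σ_n ‖M_{h_n}* v‖ ≤ M` for every unit vector `v`. -/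
theorem bibo_necessary (Γ : Type*) [CommGroup Γ]
    (h : ℕ → lp (fun _ : Γ => ℂ) 2)
    (M : ℕ → lp (fun _ : Γ => ℂ) 2 →L[ℂ] lp (fun _ : Γ => ℂ) 2)
    (hM : ∀ (n : ℕ) (u : lp (fun _ : Γ => ℂ) 2) (γ : Γ),
      (M n u) γ = ∑' φ : Γ, h n (γ * φ⁻¹) * u φ)
    (Mc : ℝ) (hMc : 0 < Mc)
    (hBIBO : ∀ (u : ℕ → lp (fun _ : Γ => ℂ) 2) (C : ℝ), (∀ n, ‖u n‖ ≤ C) →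
      ∀ n : ℕ, ‖∑ m ∈ Finset.range (n + 1), M (n - m) (u m)‖ ≤ Mc * C) :
    ∀ v : lp (fun _ : Γ => ℂ) 2, ‖v‖ = 1 →
      ∀ N : ℕ, ∑ n ∈ Finset.range N, ‖ContinuousLinearMap.adjoint (M n) v‖ ≤ Mc :=
  bibo_necessary_general Γ M Mc hBIBO
end
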